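/- arXiv:2408.03069 — 6 statements merged into one kernel-verified Lean document; each statement's English description precedes it below -/
import Mathlib

section
/- For any real number x, the expected value of the limited-precision stochastic rounding SR_{p,r}(x) equals fl_{p+r}(x), the truncation of x to p+r bits; equivalently, if SR_{p,r}(x) = x(1+δ), then E(δ) = (fl_{p+r}(x) - x)/x. -/
open MeasureTheory ProbabilityTheory

/-- Limited-precision stochastic rounding `SR_{p,r}` has expectation `fl_{p+r}(x)`:
if `X` takes the value `⌈x⌉_p = hi` with probability `q_r(x) = (fl_{p+r}(x) - lo)/ulp`
and `⌊x⌋_p = lo` otherwise, then `E(X) = fl_{p+r}(x)`; equivalently, writing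
`X = x(1+δ)`, the relative error satisfies `E(δ) = (fl_{p+r}(x) - x)/x`. -/
theorem srLimited_mean {Ω : Type*} [MeasurableSpace Ω] (μ : Measure Ω) [IsProbabilityMeasure μ]
    (x lo hi ulp flpr : ℝ) (X : Ω → ℝ) (hX : Measurable X)
    (hx : x ≠ 0)
    (hmem : ∀ ω, X ω = hi ∨ X ω = lo)
    (hlo : lo ≤ flpr) (hhi : flpr ≤ hi)
    (hulp : flpr ≠ lo → ulp = hi - lo)
    (hq : μ {ω | X ω = hi} = ENNReal.ofReal ((flpr - lo) / ulp)) :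
    ∫ ω, X ω ∂μ = flpr ∧
      ∫ ω, (X ω - x) / x ∂μ = (flpr - x) / x := by
  set A := {ω | X ω = hi} with hA
  have hAmeas : MeasurableSet A := hX (measurableSet_singleton hi)
  have hXeq : X = fun ω => lo + (hi - lo) * A.indicator (fun _ => (1:ℝ)) ω := by
    funext ω
    by_cases hmemA : ω ∈ A
    · have h1 : X ω = hi := hmemA
      simp [Set.indicator_of_mem hmemA, h1]
    · have h2 : X ω = lo := by
        rcases hmem ω with h | h
        · exact absurd h hmemA
        · exact h
      simp [Set.indicator_of_notMem hmemA, h2]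
  have hind : Integrable (A.indicator (fun _ => (1:ℝ))) μ :=
    (integrable_const (1:ℝ)).indicator hAmeas
  have hXint : Integrable X μ := by
    rw [hXeq]
    exact (integrable_const lo).add (hind.const_mul (hi - lo))
  have hintind : ∫ ω, A.indicator (fun _ => (1:ℝ)) ω ∂μ = (μ A).toReal := by
    rw [integral_indicator_const (1:ℝ) hAmeas]
    simp
    rfl
  have hmean : ∫ ω, X ω ∂μ = flpr := by
    rw [hXeq]
    rw [integral_add (integrable_const lo) (hind.const_mul (hi - lo)),
      integral_const, integral_const_mul, hintind]
    simp only [probReal_univ, ENNReal.toReal_one, smul_eq_mul, one_mul]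
    by_cases hfl : flpr = lo
    · have : μ A = 0 := by rw [hq, hfl]; simp
      rw [this]; simp [hfl]
    · have hul : ulp = hi - lo := hulp hfl
      have hlolt : lo < flpr := lt_of_le_of_ne hlo (Ne.symm hfl)
      have hpos : 0 < hi - lo := by linarith
      have hqpos : 0 ≤ (flpr - lo) / ulp := by
        rw [hul]; exact div_nonneg (by linarith) (le_of_lt hpos)
      rw [hq, ENNReal.toReal_ofReal hqpos, hul]
      field_simp
      ring
  refine ⟨hmean, ?_⟩
  have : (fun ω => (X ω - x) / x) = fun ω => X ω * (1/x) + (-1) := by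
    funext ω; field_simp; ring
  rw [this, integral_add (hXint.mul_const _) (integrable_const _),
    integral_mul_const, hmean, integral_const]
  simp only [probReal_univ, ENNReal.toReal_one, smul_eq_mul, one_mul]
  field_simp
  ring
end

section
/- Let c ≠ 0 be a real number determined by random variables δ_1, ..., δ_{k-1}, and let δ_k be the relative rounding error of SR_{p,r}(c), i.e., SR_{p,r}(c) = c(1+δ_k). Then the conditional expectation E(δ_k | δ_1, ..., δ_{k-1}) equals β_k, where β_k = (fl_{p+r}(c) - c)/c is the deterministic relative truncation error. -/
open MeasureTheory ProbabilityTheory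

/-- Lemma 3.3: let `c ≠ 0` be determined by the previous rounding errors
`δ_1, …, δ_{k-1}` (modelled by a sub-σ-algebra `𝒢` with respect to which `c`,
`lo = ⌊c⌋_p`, `hi = ⌈c⌉_p`, `ulp` and `flpr = fl_{p+r}(c)` are measurable),
and let `X = SR_{p,r}(c)`, whose conditional law given `𝒢` puts mass
`q_r(c) = (flpr - lo)/ulp` on `hi` and `1 - q_r(c)` on `lo`, so that
`E(X ∣ 𝒢) = q_r(c)·hi + (1-q_r(c))·lo`.  Then the relative error
`δ_k = (X - c)/c` satisfies `E(δ_k ∣ δ_1, …, δ_{k-1}) = β_k`, where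
`β_k = (flpr - c)/c` is the deterministic relative truncation error. -/
theorem srLimited_condexp {Ω : Type*} [m0 : MeasurableSpace Ω] (μ : Measure Ω)
    [IsProbabilityMeasure μ]
    (𝒢 : MeasurableSpace Ω) (h𝒢 : 𝒢 ≤ m0)
    (c lo hi ulp flpr : Ω → ℝ) (X : Ω → ℝ)
    (hc : Measurable[𝒢] c) (hlo : Measurable[𝒢] lo) (hhi : Measurable[𝒢] hi)
    (hulp : Measurable[𝒢] ulp) (hflpr : Measurable[𝒢] flpr)
    (hc0 : ∀ ω, c ω ≠ 0)
    (hulpdef : ∀ ω, ulp ω = hi ω - lo ω) (hulp0 : ∀ ω, ulp ω ≠ 0)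
    (hXint : Integrable X μ)
    (hδint : Integrable (fun ω => (X ω - c ω) / c ω) μ)
    (hcond : μ[X | 𝒢] =ᵐ[μ]
      fun ω => ((flpr ω - lo ω) / ulp ω) * hi ω + (1 - (flpr ω - lo ω) / ulp ω) * lo ω) :
    μ[(fun ω => (X ω - c ω) / c ω) | 𝒢] =ᵐ[μ] fun ω => (flpr ω - c ω) / c ω := by
  have hfm : StronglyMeasurable[𝒢] fun ω => (c ω)⁻¹ := hc.inv.stronglyMeasurable
  have hfint : Integrable (fun ω => (c ω)⁻¹ * X ω) μ := by
    have h : (fun ω => (c ω)⁻¹ * X ω) = fun ω => (X ω - c ω) / c ω + 1 := by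
      funext ω
      field_simp [hc0 ω]
      ring
    rw [h]
    exact hδint.add (integrable_const 1)
  have hfint' : Integrable ((fun ω => (c ω)⁻¹) * X) μ := hfint
  have h1 : μ[(fun ω => (c ω)⁻¹) * X | 𝒢] =ᵐ[μ] (fun ω => (c ω)⁻¹) * μ[X | 𝒢] :=
    condExp_mul_of_stronglyMeasurable_left hfm hfint' hXint
  have hsplit : (fun ω => (X ω - c ω) / c ω)
      = (fun ω => (c ω)⁻¹) * X + fun _ => (-1 : ℝ) := by
    funext ω
    simp only [Pi.add_apply, Pi.mul_apply]
    field_simp [hc0 ω]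
    ring
  have h2 : μ[(fun ω => (X ω - c ω) / c ω) | 𝒢]
      =ᵐ[μ] μ[(fun ω => (c ω)⁻¹) * X | 𝒢] + μ[(fun _ => (-1 : ℝ)) | 𝒢] := by
    rw [hsplit]
    exact condExp_add hfint' (integrable_const _) 𝒢
  have hconst : μ[(fun _ => (-1 : ℝ)) | 𝒢] = fun _ => (-1 : ℝ) := condExp_const h𝒢 _
  refine h2.trans ?_
  rw [hconst]
  filter_upwards [h1, hcond] with ω hω1 hω2
  simp only [Pi.add_apply, Pi.mul_apply] at *
  rw [hω1, hω2, hulpdef ω]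
  have hne : hi ω - lo ω ≠ 0 := by rw [← hulpdef ω]; exact hulp0 ω
  field_simp [hc0 ω, hne]
  ring
end

section
/- Let α_k, β_k be real numbers for i ≤ k ≤ n with |α_k| ≤ u_p and |β_k| ≤ u_{p+r}, and define B_i = Σ_{K ⊊ I_i} (∏_{j∈K}(1+α_j))(∏_{j∈I_i\K} β_j), where I_i = {i, ..., n}. Then |B_i| ≤ γ_{n-i+1}(u_p + u_{p+r}) - γ_{n-i+1}(u_p), where γ_m(x) = (1+x)^m - 1. -/
/-!
Expanding `∏_{j ∈ S} (a + b)` over subsets gives `∑_{K ⊆ S} a^#K b^#(S \ K)`, so removing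
the term `K = S` leaves `(a + b)^#S - a^#S`. Bounding every term of `B_i` termwise by the
corresponding term with `a = 1 + u_p` and `b = u_{p+r}` gives the claim.
-/

namespace Finset

variable {ι R : Type*} [DecidableEq ι] [CommRing R] [LinearOrder R] [IsStrictOrderedRing R]
  {S K : Finset ι} {f g : ι → R} {a b : R}

lemma abs_prod_mul_prod_sdiff_le (hKS : K ⊆ S) (hf : ∀ k ∈ S, |f k| ≤ a)
    (hg : ∀ k ∈ S, |g k| ≤ b) :
    |(∏ j ∈ K, f j) * ∏ j ∈ S \ K, g j| ≤ (∏ _j ∈ K, a) * ∏ _j ∈ S \ K, b := by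
  have hfK : ∏ j ∈ K, |f j| ≤ ∏ _j ∈ K, a :=
    prod_le_prod (fun _ _ => abs_nonneg _) fun k hk => hf k (hKS hk)
  have hgK : ∏ j ∈ S \ K, |g j| ≤ ∏ _j ∈ S \ K, b :=
    prod_le_prod (fun _ _ => abs_nonneg _) fun k hk => hg k (mem_sdiff.mp hk).1
  rw [abs_mul, abs_prod, abs_prod]
  exact mul_le_mul hfK hgK (prod_nonneg fun _ _ => abs_nonneg _)
    ((prod_nonneg fun _ _ => abs_nonneg _).trans hfK)

lemma abs_sum_proper_subsets_prod_mul_prod_sdiff_le (hf : ∀ k ∈ S, |f k| ≤ a)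
    (hg : ∀ k ∈ S, |g k| ≤ b) :
    |∑ K ∈ S.powerset.erase S, (∏ j ∈ K, f j) * ∏ j ∈ S \ K, g j|
      ≤ (a + b) ^ #S - a ^ #S := by
  have hS : S ∈ S.powerset := mem_powerset_self S
  calc |∑ K ∈ S.powerset.erase S, (∏ j ∈ K, f j) * ∏ j ∈ S \ K, g j|
      ≤ ∑ K ∈ S.powerset.erase S, |(∏ j ∈ K, f j) * ∏ j ∈ S \ K, g j| := abs_sum_le_sum_abs _ _
    _ ≤ ∑ K ∈ S.powerset.erase S, (∏ _j ∈ K, a) * ∏ _j ∈ S \ K, b :=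
        sum_le_sum fun K hK =>
          abs_prod_mul_prod_sdiff_le (mem_powerset.mp (mem_of_mem_erase hK)) hf hg
    _ = (∏ _j ∈ S, (a + b)) - (∏ _j ∈ S, a) * ∏ _j ∈ S \ S, b := by
        rw [sum_erase_eq_sub hS, prod_add]
    _ = (a + b) ^ #S - a ^ #S := by simp

end Finset

theorem bias_term_bound_general (i n : ℕ) (hin : i ≤ n) (up upr : ℝ)
    (α β : ℕ → ℝ)
    (hα : ∀ k ∈ Finset.Icc i n, |α k| ≤ up)
    (hβ : ∀ k ∈ Finset.Icc i n, |β k| ≤ upr) :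
    |∑ K ∈ (Finset.Icc i n).powerset.filter (fun K => K ≠ Finset.Icc i n),
        (∏ j ∈ K, (1 + α j)) * ∏ j ∈ Finset.Icc i n \ K, β j|
      ≤ ((1 + (up + upr)) ^ (n - i + 1) - 1) - ((1 + up) ^ (n - i + 1) - 1) := by
  have hcard : (Finset.Icc i n).card = n - i + 1 := by rw [Nat.card_Icc]; omega
  have h_one_add : ∀ k ∈ Finset.Icc i n, |1 + α k| ≤ 1 + up := fun k hk =>
    (abs_add_le _ _).trans (by rw [abs_one]; linarith [hα k hk])
  have hbound := Finset.abs_sum_proper_subsets_prod_mul_prod_sdiff_le h_one_add hβ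
  rw [hcard] at hbound
  rw [Finset.filter_ne', ← add_assoc]
  linarith

/-- Bound (3.9) on the bias term: if `|α_k| ≤ u_p` and `|β_k| ≤ u_{p+r}` for
`i ≤ k ≤ n`, then the sum `B_i` over proper subsets `K ⊊ I_i = {i,…,n}` of
`(∏_{j∈K}(1+α_j))(∏_{j∈I_i\K} β_j)` satisfies
`|B_i| ≤ γ_{n-i+1}(u_p + u_{p+r}) - γ_{n-i+1}(u_p)`, with `γ_m(x) = (1+x)^m - 1`. -/
theorem bias_term_bound (i n : ℕ) (hin : i ≤ n) (up upr : ℝ)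
    (hup : 0 < up) (hupr : 0 < upr)
    (α β : ℕ → ℝ)
    (hα : ∀ k ∈ Finset.Icc i n, |α k| ≤ up)
    (hβ : ∀ k ∈ Finset.Icc i n, |β k| ≤ upr) :
    |∑ K ∈ (Finset.Icc i n).powerset.filter (fun K => K ≠ Finset.Icc i n),
        (∏ j ∈ K, (1 + α j)) * ∏ j ∈ Finset.Icc i n \ K, β j|
      ≤ ((1 + (up + upr)) ^ (n - i + 1) - 1) - ((1 + up) ^ (n - i + 1) - 1) :=
  bias_term_bound_general i n hin up upr α β hα hβ
end

section
/- Under the decomposition δ_k = α_k + β_k with |α_k| ≤ u_p and |β_k| ≤ u_{p+r}, the product of rounding-error factors satisfies ∏_{k=i}^n (1+δ_k) = ∏_{k=i}^n (1+α_k) + B_i, where B_i = Σ_{K ⊊ I_i} (∏_{j∈K}(1+α_j))(∏_{j∈I_i\K} β_j) and |B_i| ≤ γ_{n-i+1}(u_p + u_{p+r}) - γ_{n-i+1}(u_p). -/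
/-! Expanding `∏ (1 + α_k + β_k)` over subsets gives `∏ (1 + α_k)` (the term `K = I_i`) plus the
remainder `B_i`. Bounding every factor of `B_i` by its absolute value bound turns `B_i` into the
same remainder for the constant factors `1 + u_p` and `u_{p+r}`, which the same expansion evaluates
to `(1 + u_p + u_{p+r})^m - (1 + u_p)^m` with `m = n - i + 1`. -/

namespace Finset

variable {ι R : Type*} [DecidableEq ι]

def prodAddRemainder [CommSemiring R] (s : Finset ι) (f g : ι → R) : R :=
  ∑ K ∈ s.powerset.filter (fun K => K ≠ s), (∏ j ∈ K, f j) * ∏ j ∈ s \ K, g j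

theorem prod_add_eq_prod_add_prodAddRemainder [CommSemiring R] (s : Finset ι) (f g : ι → R) :
    ∏ i ∈ s, (f i + g i) = ∏ i ∈ s, f i + prodAddRemainder s f g := by
  rw [prod_add, prodAddRemainder, filter_ne', ← add_sum_erase _ _ (mem_powerset_self s),
    sdiff_self, bot_eq_empty, prod_empty, mul_one]

theorem prodAddRemainder_const [CommRing R] (s : Finset ι) (a b : R) :
    prodAddRemainder s (fun _ => a) (fun _ => b) = (a + b) ^ #s - a ^ #s := by
  have h := prod_add_eq_prod_add_prodAddRemainder s (fun _ => a) (fun _ => b)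
  simp only [prod_const] at h
  rw [h, add_sub_cancel_left]

theorem abs_prodAddRemainder_le [CommRing R] [LinearOrder R] [IsStrictOrderedRing R]
    {s : Finset ι} {f g : ι → R} {a b : R} (hf : ∀ j ∈ s, |f j| ≤ a) (hg : ∀ j ∈ s, |g j| ≤ b) :
    |prodAddRemainder s f g| ≤ prodAddRemainder s (fun _ => a) (fun _ => b) := by
  refine (abs_sum_le_sum_abs _ _).trans (sum_le_sum fun K hK => ?_)
  have hKs : K ⊆ s := mem_powerset.mp (mem_filter.mp hK).1
  rw [abs_mul, abs_prod, abs_prod]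
  exact mul_le_mul
    (prod_le_prod (fun j _ => abs_nonneg _) fun j hj => hf j (hKs hj))
    (prod_le_prod (fun j _ => abs_nonneg _) fun j hj => hg j (mem_sdiff.mp hj).1)
    (prod_nonneg fun j _ => abs_nonneg _)
    (prod_nonneg fun j hj => (abs_nonneg _).trans (hf j (hKs hj)))

end Finset

theorem product_decomposition_general (i n : ℕ) (hin : i ≤ n) (up upr : ℝ)
    (δ α β : ℕ → ℝ)
    (hδ : ∀ k ∈ Finset.Icc i n, δ k = α k + β k)
    (hα : ∀ k ∈ Finset.Icc i n, |α k| ≤ up)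
    (hβ : ∀ k ∈ Finset.Icc i n, |β k| ≤ upr) :
    (∏ k ∈ Finset.Icc i n, (1 + δ k) =
      ∏ k ∈ Finset.Icc i n, (1 + α k) +
        ∑ K ∈ (Finset.Icc i n).powerset.filter (fun K => K ≠ Finset.Icc i n),
          (∏ j ∈ K, (1 + α j)) * ∏ j ∈ Finset.Icc i n \ K, β j) ∧
    |∑ K ∈ (Finset.Icc i n).powerset.filter (fun K => K ≠ Finset.Icc i n),
        (∏ j ∈ K, (1 + α j)) * ∏ j ∈ Finset.Icc i n \ K, β j|
      ≤ ((1 + (up + upr)) ^ (n - i + 1) - 1) - ((1 + up) ^ (n - i + 1) - 1) := by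
  have hcard : (Finset.Icc i n).card = n - i + 1 := by rw [Nat.card_Icc]; omega
  have habs_one_add : ∀ k ∈ Finset.Icc i n, |1 + α k| ≤ 1 + up := fun k hk =>
    (abs_add_le _ _).trans (by rw [abs_one]; linarith [hα k hk])
  refine ⟨?_, ?_⟩
  · refine (Finset.prod_congr rfl fun k hk => ?_).trans
      (Finset.prod_add_eq_prod_add_prodAddRemainder _ _ _)
    rw [hδ k hk, add_assoc]
  · calc |Finset.prodAddRemainder (Finset.Icc i n) (fun j => 1 + α j) β|
        ≤ Finset.prodAddRemainder (Finset.Icc i n) (fun _ => 1 + up) (fun _ => upr) :=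
          Finset.abs_prodAddRemainder_le habs_one_add hβ
      _ = _ := by rw [Finset.prodAddRemainder_const, hcard]; ring

/-- Lemma 3.9 (second part): under the decomposition `δ_k = α_k + β_k` with
`|α_k| ≤ u_p` and `|β_k| ≤ u_{p+r}` for `i ≤ k ≤ n`, the product of rounding-error
factors satisfies `∏_{k=i}^n (1+δ_k) = ∏_{k=i}^n (1+α_k) + B_i`, where
`B_i = Σ_{K ⊊ I_i} (∏_{j∈K}(1+α_j))(∏_{j∈I_i\K} β_j)` and
`|B_i| ≤ γ_{n-i+1}(u_p + u_{p+r}) - γ_{n-i+1}(u_p)` with `γ_m(x) = (1+x)^m - 1`. -/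
theorem product_decomposition (i n : ℕ) (hin : i ≤ n) (up upr : ℝ)
    (hup : 0 < up) (hupr : 0 < upr)
    (δ α β : ℕ → ℝ)
    (hδ : ∀ k ∈ Finset.Icc i n, δ k = α k + β k)
    (hα : ∀ k ∈ Finset.Icc i n, |α k| ≤ up)
    (hβ : ∀ k ∈ Finset.Icc i n, |β k| ≤ upr) :
    (∏ k ∈ Finset.Icc i n, (1 + δ k) =
      ∏ k ∈ Finset.Icc i n, (1 + α k) +
        ∑ K ∈ (Finset.Icc i n).powerset.filter (fun K => K ≠ Finset.Icc i n),
          (∏ j ∈ K, (1 + α j)) * ∏ j ∈ Finset.Icc i n \ K, β j) ∧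
    |∑ K ∈ (Finset.Icc i n).powerset.filter (fun K => K ≠ Finset.Icc i n),
        (∏ j ∈ K, (1 + α j)) * ∏ j ∈ Finset.Icc i n \ K, β j|
      ≤ ((1 + (up + upr)) ^ (n - i + 1) - 1) - ((1 + up) ^ (n - i + 1) - 1) :=
  product_decomposition_general i n hin up upr δ α β hδ hα hβ
end

section
/- Let M_0, ..., M_n be a martingale with respect to X_0, ..., X_n, and suppose there exist positive constants a_k with |M_k - M_{k-1}| ≤ a_k for k = 1, ..., n. Then for any 0 < λ < 1, P(|M_n - M_0| ≤ sqrt(Σ_{k=1}^n a_k^2) · sqrt(2 ln(2/λ))) ≥ 1 - λ. -/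
open MeasureTheory ProbabilityTheory

/-- The σ-algebra generated by `X_0, …, X_k`. -/
def genAlg {Ω : Type*} (X : ℕ → Ω → ℝ) (k : ℕ) : MeasurableSpace Ω :=
  ⨆ i ∈ Finset.Iic k, MeasurableSpace.comap (X i) inferInstance

open Real

section AzumaAux

section aux
variable {Ω : Type*} [m0 : MeasurableSpace Ω]

lemma genAlg_le (X : ℕ → Ω → ℝ) (hX : ∀ k, Measurable (X k)) (k : ℕ) :
    genAlg X k ≤ m0 := by
  refine iSup_le fun i => iSup_le fun _ => ?_
  exact (hX i).comap_le

lemma genAlg_mono (X : ℕ → Ω → ℝ) {j k : ℕ} (h : j ≤ k) :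
    genAlg X j ≤ genAlg X k := by
  refine iSup_le fun i => iSup_le fun hi => ?_
  exact le_iSup_of_le i (le_iSup_of_le (Finset.mem_Iic.mpr ((Finset.mem_Iic.mp hi).trans h)) le_rfl)

lemma exp_le_lin {c s x : ℝ} (hc : 0 < c) (hx : |x| ≤ c) :
    exp (s * x) ≤ cosh (s * c) + (sinh (s * c) / c) * x := by
  have hx1 : -c ≤ x := (abs_le.mp hx).1
  have hx2 : x ≤ c := (abs_le.mp hx).2
  have hθ : 0 ≤ (c - x) / (2 * c) := div_nonneg (by linarith) (by linarith)
  have hb : 0 ≤ (c + x) / (2 * c) := by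
    apply div_nonneg (by linarith) (by linarith)
  have hsum : (c - x) / (2 * c) + (c + x) / (2 * c) = 1 := by
    field_simp
    ring
  have key := convexOn_exp.2 (Set.mem_univ (-(s * c))) (Set.mem_univ (s * c)) hθ hb hsum
  have harg : ((c - x) / (2 * c)) • (-(s * c)) + ((c + x) / (2 * c)) • (s * c) = s * x := by
    simp only [smul_eq_mul]
    rw [div_mul_eq_mul_div, div_mul_eq_mul_div, ← add_div, div_eq_iff (by positivity : (2:ℝ) * c ≠ 0)]
    ring
  rw [harg] at key
  refine key.trans (le_of_eq ?_)
  rw [Real.cosh_eq, Real.sinh_eq]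
  simp only [smul_eq_mul]
  field_simp
  ring

end aux


section aux2
variable {Ω : Type*} [m0 : MeasurableSpace Ω] {μ : Measure Ω} [IsProbabilityMeasure μ]

lemma integrable_of_aebdd {f : Ω → ℝ} (hf : AEStronglyMeasurable f μ) {C : ℝ}
    (h : ∀ᵐ ω ∂μ, |f ω| ≤ C) : Integrable f μ :=
  Integrable.mono' (integrable_const C) hf (by simpa [Real.norm_eq_abs] using h)

lemma condexp_exp_le {F : MeasurableSpace Ω} (hF : F ≤ m0)
    {D : Ω → ℝ} (hDm : Measurable[m0] D) (hDi : Integrable D μ)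
    (hzero : μ[D|F] =ᵐ[μ] fun _ => 0) {c : ℝ} (hc : 0 < c)
    (hbd : ∀ᵐ ω ∂μ, |D ω| ≤ c) (s : ℝ) :
    μ[fun ω => exp (s * D ω)|F] ≤ᵐ[μ] fun _ => exp (s ^ 2 * c ^ 2 / 2) := by
  have hexpm : Measurable[m0] (fun ω => exp (s * D ω)) := (hDm.const_mul s).exp
  have hexpi : Integrable (fun ω => exp (s * D ω)) μ := by
    refine @integrable_of_aebdd Ω m0 μ _ _ hexpm.aestronglyMeasurable (exp (|s| * c)) ?_
    filter_upwards [hbd] with ω hω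
    rw [abs_of_pos (exp_pos _)]
    exact exp_le_exp.mpr ((le_abs_self _).trans (by
      rw [abs_mul]; exact mul_le_mul_of_nonneg_left hω (abs_nonneg s)))
  set g : Ω → ℝ := fun ω => Real.cosh (s * c) + (Real.sinh (s * c) / c) * D ω with hg_def
  have hgi : Integrable g μ := (integrable_const _).add (hDi.const_mul _)
  have hle : (fun ω => exp (s * D ω)) ≤ᵐ[μ] g := by
    filter_upwards [hbd] with ω hω
    exact exp_le_lin hc hω
  have h1 : μ[fun ω => exp (s * D ω)|F] ≤ᵐ[μ] μ[g|F] := condExp_mono hexpi hgi hle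
  have h2 : μ[g|F] =ᵐ[μ] fun _ => Real.cosh (s * c) := by
    have hadd : μ[g|F] =ᵐ[μ]
        μ[(fun _ => Real.cosh (s * c))|F] + μ[fun ω => (Real.sinh (s * c) / c) * D ω|F] :=
      condExp_add (integrable_const _) (hDi.const_mul _) F
    have hsmul : μ[fun ω => (Real.sinh (s * c) / c) * D ω|F] =ᵐ[μ]
        fun ω => (Real.sinh (s * c) / c) * (μ[D|F]) ω := by
      simpa [Pi.smul_def, smul_eq_mul] using condExp_smul (μ := μ) (Real.sinh (s * c) / c) D F
    filter_upwards [hadd, hsmul, hzero] with ω h₁ h₂ h₃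
    simp only [Pi.add_apply] at h₁
    rw [h₁, h₂, h₃, condExp_const hF]
    simp
  filter_upwards [h1, h2] with ω h₁ h₂
  refine (h₁.trans_eq h₂).trans ?_
  calc Real.cosh (s * c) ≤ exp ((s * c) ^ 2 / 2) := Real.cosh_le_exp_half_sq _
    _ = exp (s ^ 2 * c ^ 2 / 2) := by rw [mul_pow]

end aux2

section aux3
variable {Ω : Type*} [m0 : MeasurableSpace Ω]

lemma aebound (μ : Measure Ω) (n : ℕ) (M : ℕ → Ω → ℝ) (a : ℕ → ℝ)
    (hbdd : ∀ k ∈ Finset.Icc 1 n, ∀ᵐ ω ∂μ, |M k ω - M (k - 1) ω| ≤ a k) :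
    ∀ k ≤ n, ∀ᵐ ω ∂μ, |M k ω - M 0 ω| ≤ ∑ j ∈ Finset.Icc 1 k, a j := by
  intro k
  induction k with
  | zero => intro _; filter_upwards with ω; simp
  | succ k ih =>
    intro hk
    have h1 := hbdd (k + 1) (Finset.mem_Icc.mpr ⟨Nat.succ_le_succ (Nat.zero_le k), hk⟩)
    filter_upwards [h1, ih (Nat.le_of_succ_le hk)] with ω h₁ h₂
    rw [Finset.sum_Icc_succ_top (Nat.succ_le_succ (Nat.zero_le k))]
    simp only [Nat.add_sub_cancel] at h₁
    calc |M (k + 1) ω - M 0 ω| ≤ |M (k + 1) ω - M k ω| + |M k ω - M 0 ω| := abs_sub_le _ _ _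
      _ ≤ ∑ j ∈ Finset.Icc 1 k, a j + a (k + 1) := by linarith

lemma azuma_mgf (μ : Measure Ω) [IsProbabilityMeasure μ] (n : ℕ)
    (X M : ℕ → Ω → ℝ) (a : ℕ → ℝ)
    (hX : ∀ k, Measurable (X k))
    (hadapted : ∀ k ≤ n, Measurable[genAlg X k] (M k))
    (hint : ∀ k ≤ n, Integrable (M k) μ)
    (hmart : ∀ k ∈ Finset.Icc 1 n, μ[M k | genAlg X (k - 1)] =ᵐ[μ] M (k - 1))
    (hbdd : ∀ k ∈ Finset.Icc 1 n, ∀ᵐ ω ∂μ, |M k ω - M (k - 1) ω| ≤ a k)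
    (ha : ∀ k ∈ Finset.Icc 1 n, 0 < a k) (s : ℝ) :
    ∀ k ≤ n, ∫ ω, exp (s * (M k ω - M 0 ω)) ∂μ
      ≤ exp (s ^ 2 * (∑ j ∈ Finset.Icc 1 k, a j ^ 2) / 2) := by
  have hMm : ∀ k ≤ n, Measurable[m0] (M k) :=
    fun k hk => (hadapted k hk).mono (genAlg_le X hX k) le_rfl
  intro k
  induction k with
  | zero =>
    intro _
    simp [Finset.Icc_eq_empty (by omega : ¬ (1:ℕ) ≤ 0)]
  | succ k ih =>
    intro hk
    have hk' : k ≤ n := Nat.le_of_succ_le hk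
    have hmem : k + 1 ∈ Finset.Icc 1 n := Finset.mem_Icc.mpr ⟨Nat.succ_le_succ (Nat.zero_le k), hk⟩
    have IH := ih hk'
    have hF : genAlg X k ≤ m0 := genAlg_le X hX k
    set D : Ω → ℝ := fun ω => M (k + 1) ω - M k ω with hD_def
    have hDm : Measurable[m0] D := (hMm (k + 1) hk).sub (hMm k hk')
    have hDi : Integrable D μ := (hint (k + 1) hk).sub (hint k hk')
    have hbD : ∀ᵐ ω ∂μ, |D ω| ≤ a (k + 1) := by
      filter_upwards [hbdd (k + 1) hmem] with ω hω
      simpa only [Nat.add_sub_cancel] using hω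
    -- martingale property: μ[D|genAlg X k] = 0
    have hMkF : μ[M k|genAlg X k] =ᵐ[μ] M k := by
      rw [condExp_of_stronglyMeasurable hF ((hadapted k hk').stronglyMeasurable) (hint k hk')]
    have hzero : μ[D|genAlg X k] =ᵐ[μ] fun _ => 0 := by
      have hm1 := hmart (k + 1) hmem
      simp only [Nat.add_sub_cancel] at hm1
      have hsub : μ[D|genAlg X k] =ᵐ[μ] μ[M (k + 1)|genAlg X k] - μ[M k|genAlg X k] :=
        condExp_sub (hint (k + 1) hk) (hint k hk') _
      filter_upwards [hsub, hm1, hMkF] with ω h₁ h₂ h₃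
      simp only [Pi.sub_apply] at h₁
      rw [h₁, h₂, h₃, sub_self]
    have hHoef := condexp_exp_le hF hDm hDi hzero (ha (k + 1) hmem) hbD s
    -- functions
    set f : Ω → ℝ := fun ω => exp (s * (M k ω - M 0 ω)) with hf_def
    set g : Ω → ℝ := fun ω => exp (s * D ω) with hg_def
    have hM0F : Measurable[genAlg X k] (M 0) := (hadapted 0 (Nat.zero_le n)).mono (genAlg_mono X (Nat.zero_le k)) le_rfl
    have hfF : StronglyMeasurable[genAlg X k] f :=
      (((((hadapted k hk').sub hM0F).const_mul s)).exp).stronglyMeasurable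
    have hfm : Measurable[m0] f := (((hMm k hk').sub (hMm 0 (Nat.zero_le n))).const_mul s).exp
    have hgm : Measurable[m0] g := (hDm.const_mul s).exp
    have hB := aebound μ n M a hbdd k hk'
    have hfi : Integrable f μ := by
      refine @integrable_of_aebdd Ω m0 μ _ _ hfm.aestronglyMeasurable
        (exp (|s| * (∑ j ∈ Finset.Icc 1 k, |a j|))) ?_
      filter_upwards [hB] with ω hω
      rw [abs_of_pos (exp_pos _)]
      refine exp_le_exp.mpr ((le_abs_self _).trans ?_)
      rw [abs_mul]
      refine mul_le_mul_of_nonneg_left (hω.trans ?_) (abs_nonneg s)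
      exact Finset.sum_le_sum fun j _ => le_abs_self _
    have hgi : Integrable g μ := by
      refine @integrable_of_aebdd Ω m0 μ _ _ hgm.aestronglyMeasurable
        (exp (|s| * a (k + 1))) ?_
      filter_upwards [hbD] with ω hω
      rw [abs_of_pos (exp_pos _)]
      refine exp_le_exp.mpr ((le_abs_self _).trans ?_)
      rw [abs_mul]
      exact mul_le_mul_of_nonneg_left hω (abs_nonneg s)
    have hfgi : Integrable (f * g) μ := by
      refine @integrable_of_aebdd Ω m0 μ _ _ (hfm.mul hgm).aestronglyMeasurable
        (exp (|s| * (∑ j ∈ Finset.Icc 1 k, |a j|)) * exp (|s| * a (k + 1))) ?_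
      filter_upwards [hB, hbD] with ω h₁ h₂
      rw [Pi.mul_apply, abs_mul, abs_of_pos (exp_pos _), abs_of_pos (exp_pos _)]
      refine mul_le_mul ?_ ?_ (exp_pos _).le (exp_pos _).le
      · refine exp_le_exp.mpr ((le_abs_self _).trans ?_)
        rw [abs_mul]
        refine mul_le_mul_of_nonneg_left (h₁.trans ?_) (abs_nonneg s)
        exact Finset.sum_le_sum fun j _ => le_abs_self _
      · refine exp_le_exp.mpr ((le_abs_self _).trans ?_)
        rw [abs_mul]
        exact mul_le_mul_of_nonneg_left h₂ (abs_nonneg s)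
    have hpull : μ[f * g|genAlg X k] =ᵐ[μ] f * μ[g|genAlg X k] :=
      condExp_mul_of_stronglyMeasurable_left hfF hfgi hgi
    have heval : (fun ω => exp (s * (M (k + 1) ω - M 0 ω))) = f * g := by
      funext ω
      rw [Pi.mul_apply, hf_def, hg_def, hD_def, ← Real.exp_add]
      ring_nf
    rw [heval]
    have hcond_int : Integrable (f * μ[g|genAlg X k]) μ := (integrable_condExp).congr hpull
    calc ∫ ω, (f * g) ω ∂μ = ∫ ω, (μ[f * g|genAlg X k]) ω ∂μ := (integral_condExp hF (f := f * g)).symm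
      _ = ∫ ω, (f * μ[g|genAlg X k]) ω ∂μ := integral_congr_ae hpull
      _ ≤ ∫ ω, f ω * exp (s ^ 2 * a (k + 1) ^ 2 / 2) ∂μ := by
          refine integral_mono_ae hcond_int (hfi.mul_const _) ?_
          filter_upwards [hHoef] with ω hω
          rw [Pi.mul_apply]
          exact mul_le_mul_of_nonneg_left hω (exp_pos _).le
      _ = (∫ ω, f ω ∂μ) * exp (s ^ 2 * a (k + 1) ^ 2 / 2) := integral_mul_const _ _
      _ ≤ exp (s ^ 2 * (∑ j ∈ Finset.Icc 1 k, a j ^ 2) / 2) * exp (s ^ 2 * a (k + 1) ^ 2 / 2) :=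
          mul_le_mul_of_nonneg_right IH (exp_pos _).le
      _ = exp (s ^ 2 * (∑ j ∈ Finset.Icc 1 (k + 1), a j ^ 2) / 2) := by
          rw [← Real.exp_add, Finset.sum_Icc_succ_top (Nat.succ_le_succ (Nat.zero_le k))]
          congr 1
          ring

end aux3

end AzumaAux

/-- Azuma–Hoeffding inequality (Lemma 2.4): let `M_0, …, M_n` be a martingale with
respect to `X_0, …, X_n` with bounded increments `|M_k - M_{k-1}| ≤ a_k` (a.s.) for
positive constants `a_k`.  Then for any `0 < λ < 1`,
`P(|M_n - M_0| ≤ sqrt(Σ a_k^2) · sqrt(2 ln(2/λ))) ≥ 1 - λ`. -/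
theorem azuma_hoeffding {Ω : Type*} [m0 : MeasurableSpace Ω] (μ : Measure Ω)
    [IsProbabilityMeasure μ] (n : ℕ)
    (X M : ℕ → Ω → ℝ) (a : ℕ → ℝ)
    (hX : ∀ k, Measurable (X k))
    (ha : ∀ k ∈ Finset.Icc 1 n, 0 < a k)
    (hadapted : ∀ k ≤ n, Measurable[genAlg X k] (M k))
    (hint : ∀ k ≤ n, Integrable (M k) μ)
    (hmart : ∀ k ∈ Finset.Icc 1 n, μ[M k | genAlg X (k - 1)] =ᵐ[μ] M (k - 1))
    (hbdd : ∀ k ∈ Finset.Icc 1 n, ∀ᵐ ω ∂μ, |M k ω - M (k - 1) ω| ≤ a k)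
    (lam : ℝ) (hlam0 : 0 < lam) (hlam1 : lam < 1) :
    ENNReal.ofReal (1 - lam) ≤
      μ {ω | |M n ω - M 0 ω| ≤
        Real.sqrt (∑ k ∈ Finset.Icc 1 n, a k ^ 2) * Real.sqrt (2 * Real.log (2 / lam))} := by
  have hMm : ∀ k ≤ n, Measurable[m0] (M k) :=
    fun k hk => (hadapted k hk).mono (genAlg_le X hX k) le_rfl
  have hDm : Measurable fun ω => M n ω - M 0 ω := (hMm n le_rfl).sub (hMm 0 (Nat.zero_le n))
  set S := ∑ k ∈ Finset.Icc 1 n, a k ^ 2 with hS_def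
  set L := 2 * Real.log (2 / lam) with hL_def
  set t := Real.sqrt S * Real.sqrt L with ht_def
  rcases Nat.eq_zero_or_pos n with hn | hn
  · subst hn
    have hset : {ω | |M 0 ω - M 0 ω| ≤ t} = Set.univ := by
      ext ω
      simp only [Set.mem_setOf_eq, Set.mem_univ, iff_true, sub_self, abs_zero]
      positivity
    rw [hset, measure_univ]
    exact ENNReal.ofReal_le_one.mpr (by linarith)
  have hS_pos : 0 < S :=
    Finset.sum_pos (fun k hk => pow_pos (ha k hk) 2)
      ⟨1, Finset.mem_Icc.mpr ⟨le_rfl, hn⟩⟩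
  have hlog : 0 < Real.log (2 / lam) := Real.log_pos (by rw [lt_div_iff₀ hlam0]; linarith)
  have hL_pos : 0 < L := by rw [hL_def]; linarith
  have ht_pos : 0 < t := mul_pos (Real.sqrt_pos.mpr hS_pos) (Real.sqrt_pos.mpr hL_pos)
  have ht_sq : t ^ 2 = S * L := by
    rw [ht_def, mul_pow, Real.sq_sqrt hS_pos.le, Real.sq_sqrt hL_pos.le]
  have hmgf_bound := azuma_mgf μ n X M a hX hadapted hint hmart hbdd ha
  have hB := aebound μ n M a hbdd n le_rfl
  have hint_exp : ∀ s : ℝ, Integrable (fun ω => exp (s * (M n ω - M 0 ω))) μ := by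
    intro s
    refine @integrable_of_aebdd Ω m0 μ _ _ ((hDm.const_mul s).exp).aestronglyMeasurable
      (exp (|s| * (∑ j ∈ Finset.Icc 1 n, |a j|))) ?_
    filter_upwards [hB] with ω hω
    rw [abs_of_pos (exp_pos _)]
    refine exp_le_exp.mpr ((le_abs_self _).trans ?_)
    rw [abs_mul]
    refine mul_le_mul_of_nonneg_left (hω.trans ?_) (abs_nonneg s)
    exact Finset.sum_le_sum fun j _ => le_abs_self _
  have hs0 : (0:ℝ) ≤ t / S := div_nonneg ht_pos.le hS_pos.le
  have hchern : exp (-(t / S) * t) * exp ((t / S) ^ 2 * S / 2) = lam / 2 := by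
    rw [← Real.exp_add]
    have harg : -(t / S) * t + (t / S) ^ 2 * S / 2 = -Real.log (2 / lam) := by
      have h2 : -(t / S) * t + (t / S) ^ 2 * S / 2 = -(t ^ 2) / (2 * S) := by
        field_simp
        ring
      rw [h2, ht_sq, hL_def]
      field_simp
    rw [harg, Real.exp_neg, Real.exp_log (by positivity), inv_div]
  have hup : μ {ω | t ≤ M n ω - M 0 ω} ≤ ENNReal.ofReal (lam / 2) := by
    have h := measure_ge_le_exp_mul_mgf (μ := μ) (X := fun ω => M n ω - M 0 ω) t hs0
      (hint_exp (t / S))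
    have h2 : mgf (fun ω => M n ω - M 0 ω) μ (t / S) ≤ exp ((t / S) ^ 2 * S / 2) := by
      rw [mgf]
      exact hmgf_bound (t / S) n le_rfl
    have h3 : (μ {ω | t ≤ M n ω - M 0 ω}).toReal ≤ lam / 2 := by
      refine h.trans ?_
      calc exp (-(t / S) * t) * mgf (fun ω => M n ω - M 0 ω) μ (t / S)
          ≤ exp (-(t / S) * t) * exp ((t / S) ^ 2 * S / 2) :=
            mul_le_mul_of_nonneg_left h2 (exp_pos _).le
        _ = lam / 2 := hchern
    rw [← ENNReal.ofReal_toReal (measure_ne_top μ _)]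
    exact ENNReal.ofReal_le_ofReal h3
  have hflip : (fun ω => exp ((t / S) * (M 0 ω - M n ω)))
      = fun ω => exp ((-(t / S)) * (M n ω - M 0 ω)) := by
    funext ω; congr 1; ring
  have hdown : μ {ω | t ≤ M 0 ω - M n ω} ≤ ENNReal.ofReal (lam / 2) := by
    have hintflip : Integrable (fun ω => exp ((t / S) * (M 0 ω - M n ω))) μ := by
      rw [hflip]; exact hint_exp _
    have h := measure_ge_le_exp_mul_mgf (μ := μ) (X := fun ω => M 0 ω - M n ω) t hs0 hintflip
    have h2 : mgf (fun ω => M 0 ω - M n ω) μ (t / S) ≤ exp ((t / S) ^ 2 * S / 2) := by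
      rw [mgf]
      have hb := hmgf_bound (-(t / S)) n le_rfl
      rw [neg_sq] at hb
      calc ∫ ω, exp ((t / S) * (M 0 ω - M n ω)) ∂μ
          = ∫ ω, exp ((-(t / S)) * (M n ω - M 0 ω)) ∂μ := by rw [hflip]
        _ ≤ _ := hb
    have h3 : (μ {ω | t ≤ M 0 ω - M n ω}).toReal ≤ lam / 2 := by
      refine h.trans ?_
      calc exp (-(t / S) * t) * mgf (fun ω => M 0 ω - M n ω) μ (t / S)
          ≤ exp (-(t / S) * t) * exp ((t / S) ^ 2 * S / 2) :=
            mul_le_mul_of_nonneg_left h2 (exp_pos _).le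
        _ = lam / 2 := hchern
    rw [← ENNReal.ofReal_toReal (measure_ne_top μ _)]
    exact ENNReal.ofReal_le_ofReal h3
  set E := {ω | |M n ω - M 0 ω| ≤ t} with hE_def
  have hEmeas : MeasurableSet E := measurableSet_le hDm.abs measurable_const
  have hsub : Eᶜ ⊆ {ω | t ≤ M n ω - M 0 ω} ∪ {ω | t ≤ M 0 ω - M n ω} := by
    intro ω hω
    simp only [hE_def, Set.mem_compl_iff, Set.mem_setOf_eq, not_le] at hω
    rcases lt_abs.mp hω with h | h
    · exact Or.inl h.le
    · right; simp only [Set.mem_setOf_eq]; linarith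
  have hcle : μ Eᶜ ≤ ENNReal.ofReal lam := by
    refine (measure_mono hsub).trans ((measure_union_le _ _).trans ?_)
    calc μ {ω | t ≤ M n ω - M 0 ω} + μ {ω | t ≤ M 0 ω - M n ω}
        ≤ ENNReal.ofReal (lam / 2) + ENNReal.ofReal (lam / 2) := add_le_add hup hdown
      _ = ENNReal.ofReal lam := by
          rw [← ENNReal.ofReal_add (by linarith) (by linarith)]; norm_num
  have h1 : (1 : ENNReal) ≤ μ E + ENNReal.ofReal lam := by
    calc (1 : ENNReal) = μ Set.univ := measure_univ.symm
      _ = μ E + μ Eᶜ := (measure_add_measure_compl hEmeas).symm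
      _ ≤ μ E + ENNReal.ofReal lam := add_le_add_right hcle _
  have h2 : ENNReal.ofReal (1 - lam) + ENNReal.ofReal lam ≤ μ E + ENNReal.ofReal lam := by
    rw [← ENNReal.ofReal_add (by linarith) hlam0.le, sub_add_cancel, ENNReal.ofReal_one]
    exact h1
  exact (ENNReal.add_le_add_iff_right ENNReal.ofReal_ne_top).mp h2
end

section
/- For a fixed probability level λ and as (u_p, u_{p+r}) → (0,0), the probabilistic error bound for the inner product satisfies sqrt(u_p γ_{2n}(u_p)) sqrt(ln(2/λ)) + γ_n(u_p + u_{p+r}) - γ_n(u_p) = sqrt(2n) sqrt(ln(2/λ)) u_p + n u_{p+r} + O(‖(u_p, u_{p+r})‖_2^2). -/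
open Asymptotics

lemma aux_pow_bound (m : ℕ) : ∃ C : ℝ, 0 ≤ C ∧ ∀ t : ℝ, |t| ≤ 1 →
    |(1 + t) ^ m - 1 - (m : ℝ) * t| ≤ C * t ^ 2 := by
  induction m with
  | zero => exact ⟨0, le_refl 0, fun t ht => by simp⟩
  | succ m ih =>
    obtain ⟨C, hC, h⟩ := ih
    refine ⟨2 * C + m, by positivity, fun t ht => ?_⟩
    have key : (1 + t) ^ (m + 1) - 1 - ((m + 1 : ℕ) : ℝ) * t
        = (1 + t) * ((1 + t) ^ m - 1 - (m : ℝ) * t) + (m : ℝ) * t ^ 2 := by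
      push_cast; ring
    have h1 : |1 + t| ≤ 2 := by
      calc |1 + t| ≤ |1| + |t| := abs_add_le 1 t
        _ ≤ 1 + 1 := by rw [abs_one]; gcongr
        _ = 2 := by norm_num
    rw [key]
    calc |(1 + t) * ((1 + t) ^ m - 1 - (m : ℝ) * t) + (m : ℝ) * t ^ 2|
        ≤ |(1 + t) * ((1 + t) ^ m - 1 - (m : ℝ) * t)| + |(m : ℝ) * t ^ 2| := abs_add_le _ _
      _ = |1 + t| * |(1 + t) ^ m - 1 - (m : ℝ) * t| + (m : ℝ) * t ^ 2 := by
          rw [abs_mul, abs_mul, abs_of_nonneg (show (0:ℝ) ≤ (m:ℝ) from Nat.cast_nonneg m),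
            abs_pow, sq_abs]
      _ ≤ 2 * (C * t ^ 2) + (m : ℝ) * t ^ 2 := by
          have := mul_le_mul h1 (h t ht) (abs_nonneg _) (by norm_num)
          linarith
      _ = (2 * C + m) * t ^ 2 := by ring

/-- Section 5: for fixed `n` and `λ`, as `(u_p, u_{p+r}) → (0,0)` (within the
nonnegative quadrant), the probabilistic inner-product error bound satisfies
`sqrt(u_p γ_{2n}(u_p)) sqrt(ln(2/λ)) + γ_n(u_p + u_{p+r}) - γ_n(u_p)
  = sqrt(2n) sqrt(ln(2/λ)) u_p + n u_{p+r} + O(‖(u_p, u_{p+r})‖²)`,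
where `γ_m(x) = (1+x)^m - 1`. -/
theorem bound_first_order_expansion (n : ℕ) (hn : 0 < n) (lam : ℝ)
    (hlam0 : 0 < lam) (hlam1 : lam < 1) :
    (fun u : ℝ × ℝ =>
        (Real.sqrt (u.1 * ((1 + u.1) ^ (2 * n) - 1)) * Real.sqrt (Real.log (2 / lam)) +
            ((1 + (u.1 + u.2)) ^ n - 1) - ((1 + u.1) ^ n - 1)) -
          (Real.sqrt (2 * n) * Real.sqrt (Real.log (2 / lam)) * u.1 + n * u.2))
      =O[nhdsWithin (0, 0) {u : ℝ × ℝ | 0 ≤ u.1 ∧ 0 ≤ u.2}]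
        (fun u : ℝ × ℝ => ‖u‖ ^ 2) := by
  obtain ⟨C1, hC1, h1⟩ := aux_pow_bound (2 * n)
  obtain ⟨C2, hC2, h2⟩ := aux_pow_bound n
  set c := Real.sqrt (Real.log (2 / lam)) with hc
  have hc0 : 0 ≤ c := Real.sqrt_nonneg _
  have hn2 : (0:ℝ) < 2 * n := by positivity
  have hsn : 0 < Real.sqrt (2 * n) := Real.sqrt_pos.mpr hn2
  rw [isBigO_iff]
  refine ⟨c * (C1 / Real.sqrt (2 * n)) + 5 * C2, ?_⟩
  rw [eventually_nhdsWithin_iff]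
  filter_upwards [Metric.ball_mem_nhds ((0:ℝ), (0:ℝ)) (by norm_num : (0:ℝ) < 1/2)]
    with u hu hmem
  obtain ⟨hx0, hy0⟩ := hmem
  set x := u.1 with hxdef
  set y := u.2 with hydef
  have hr : ‖u‖ < 1/2 := by
    have := Metric.mem_ball.mp hu
    rwa [Prod.mk_zero_zero, dist_zero_right] at this
  have hr0 : 0 ≤ ‖u‖ := norm_nonneg u
  have hxr : |x| ≤ ‖u‖ := by
    have := norm_fst_le u; rwa [Real.norm_eq_abs] at this
  have hyr : |y| ≤ ‖u‖ := by
    have := norm_snd_le u; rwa [Real.norm_eq_abs] at this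
  have hx1 : |x| ≤ 1 := by linarith
  have hxy1 : |x + y| ≤ 1 := by
    calc |x + y| ≤ |x| + |y| := abs_add_le x y
      _ ≤ 1 := by linarith
  have hx2 : x ^ 2 ≤ ‖u‖ ^ 2 := by
    calc x ^ 2 = |x| ^ 2 := (sq_abs x).symm
      _ ≤ ‖u‖ ^ 2 := by gcongr
  -- sqrt part
  have ha : 0 ≤ x * ((1 + x) ^ (2 * n) - 1) := by
    apply mul_nonneg hx0
    have : (1:ℝ) ≤ (1 + x) ^ (2 * n) := by
      calc (1:ℝ) = 1 ^ (2 * n) := (one_pow _).symm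
        _ ≤ (1 + x) ^ (2 * n) := by gcongr <;> linarith
    linarith
  have hsqrt2nx : Real.sqrt (2 * n) * x = Real.sqrt (2 * n * x ^ 2) := by
    rw [Real.sqrt_mul hn2.le, Real.sqrt_sq hx0]
  have hA : |Real.sqrt (x * ((1 + x) ^ (2 * n) - 1)) - Real.sqrt (2 * n) * x|
      ≤ C1 / Real.sqrt (2 * n) * x ^ 2 := by
    rcases eq_or_lt_of_le hx0 with h | hxpos
    · simp [← h]
    · set a := x * ((1 + x) ^ (2 * n) - 1) with hadef
      set b := 2 * (n:ℝ) * x ^ 2 with hbdef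
      have hb : 0 < b := by positivity
      have hsb : Real.sqrt b = Real.sqrt (2 * n) * x := hsqrt2nx.symm
      have hsbpos : 0 < Real.sqrt b := Real.sqrt_pos.mpr hb
      have habs : |Real.sqrt a - Real.sqrt b| * (Real.sqrt a + Real.sqrt b) = |a - b| := by
        have hden : 0 < Real.sqrt a + Real.sqrt b :=
          add_pos_of_nonneg_of_pos (Real.sqrt_nonneg a) hsbpos
        rw [← abs_of_pos hden, ← abs_mul]
        congr 1
        nlinarith [Real.sq_sqrt ha, Real.sq_sqrt hb.le]
      have key : |Real.sqrt a - Real.sqrt b| ≤ |a - b| / Real.sqrt b := by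
        rw [le_div_iff₀ hsbpos]
        calc |Real.sqrt a - Real.sqrt b| * Real.sqrt b
            ≤ |Real.sqrt a - Real.sqrt b| * (Real.sqrt a + Real.sqrt b) := by
              apply mul_le_mul_of_nonneg_left _ (abs_nonneg _)
              exact le_add_of_nonneg_left (Real.sqrt_nonneg a)
          _ = |a - b| := habs
      have habd : |a - b| ≤ C1 * x ^ 3 := by
        have e : a - b = x * ((1 + x) ^ (2 * n) - 1 - ((2 * n : ℕ) : ℝ) * x) := by
          rw [hadef, hbdef]; push_cast; ring
        rw [e, abs_mul, abs_of_nonneg hx0]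
        calc x * |(1 + x) ^ (2 * n) - 1 - ((2 * n : ℕ) : ℝ) * x|
            ≤ x * (C1 * x ^ 2) := mul_le_mul_of_nonneg_left (h1 x hx1) hx0
          _ = C1 * x ^ 3 := by ring
      rw [hsb] at key
      calc |Real.sqrt a - Real.sqrt (2 * n) * x|
          ≤ |a - b| / (Real.sqrt (2 * n) * x) := key
        _ ≤ C1 * x ^ 3 / (Real.sqrt (2 * n) * x) := by
            gcongr
        _ = C1 / Real.sqrt (2 * n) * x ^ 2 := by
            field_simp
  -- polynomial part
  have hB : |(1 + (x + y)) ^ n - (1 + x) ^ n - (n:ℝ) * y| ≤ 5 * C2 * ‖u‖ ^ 2 := by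
    have e : (1 + (x + y)) ^ n - (1 + x) ^ n - (n:ℝ) * y
        = ((1 + (x + y)) ^ n - 1 - (n:ℝ) * (x + y)) - ((1 + x) ^ n - 1 - (n:ℝ) * x) := by ring
    have hb1 := h2 (x + y) hxy1
    have hb2 := h2 x hx1
    have hxy2 : (x + y) ^ 2 ≤ 4 * ‖u‖ ^ 2 := by
      calc (x + y) ^ 2 = |x + y| ^ 2 := (sq_abs _).symm
        _ ≤ (2 * ‖u‖) ^ 2 := by
            apply pow_le_pow_left₀ (abs_nonneg _)
            calc |x + y| ≤ |x| + |y| := abs_add_le x y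
              _ ≤ 2 * ‖u‖ := by linarith
        _ = 4 * ‖u‖ ^ 2 := by ring
    rw [e]
    calc |((1 + (x + y)) ^ n - 1 - (n:ℝ) * (x + y)) - ((1 + x) ^ n - 1 - (n:ℝ) * x)|
        ≤ |(1 + (x + y)) ^ n - 1 - (n:ℝ) * (x + y)| + |(1 + x) ^ n - 1 - (n:ℝ) * x| :=
          abs_sub _ _
      _ ≤ C2 * (x + y) ^ 2 + C2 * x ^ 2 := add_le_add hb1 hb2
      _ ≤ C2 * (4 * ‖u‖ ^ 2) + C2 * ‖u‖ ^ 2 := by gcongr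
      _ = 5 * C2 * ‖u‖ ^ 2 := by ring
  -- assemble
  have e2 : (Real.sqrt (x * ((1 + x) ^ (2 * n) - 1)) * c + ((1 + (x + y)) ^ n - 1)
        - ((1 + x) ^ n - 1)) - (Real.sqrt (2 * n) * c * x + (n:ℝ) * y)
      = c * (Real.sqrt (x * ((1 + x) ^ (2 * n) - 1)) - Real.sqrt (2 * n) * x)
        + ((1 + (x + y)) ^ n - (1 + x) ^ n - (n:ℝ) * y) := by ring
  rw [Real.norm_eq_abs, Real.norm_eq_abs, e2]
  rw [abs_of_nonneg (by positivity : (0:ℝ) ≤ ‖u‖ ^ 2)]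
  calc |c * (Real.sqrt (x * ((1 + x) ^ (2 * n) - 1)) - Real.sqrt (2 * n) * x)
        + ((1 + (x + y)) ^ n - (1 + x) ^ n - (n:ℝ) * y)|
      ≤ c * |Real.sqrt (x * ((1 + x) ^ (2 * n) - 1)) - Real.sqrt (2 * n) * x|
        + |(1 + (x + y)) ^ n - (1 + x) ^ n - (n:ℝ) * y| := by
        refine (abs_add_le _ _).trans ?_
        rw [abs_mul, abs_of_nonneg hc0]
    _ ≤ c * (C1 / Real.sqrt (2 * n) * x ^ 2) + 5 * C2 * ‖u‖ ^ 2 := by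
        gcongr
    _ ≤ c * (C1 / Real.sqrt (2 * n) * ‖u‖ ^ 2) + 5 * C2 * ‖u‖ ^ 2 := by
        gcongr
    _ = (c * (C1 / Real.sqrt (2 * n)) + 5 * C2) * ‖u‖ ^ 2 := by ring
end
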